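/- arXiv:2102.06633 — 4 statements merged into one kernel-verified Lean document; each statement's English description precedes it below -/
import Mathlib

section
/- Let L be the random-walk normalized Laplacian of a simple, connected, undirected graph on N ≥ 2 nodes, with maximum degree d_max and minimum degree d_min. Let L̄ be the grounded Laplacian obtained by deleting the row and column of L corresponding to node 1. Then the smallest eigenvalue λ̄₁ of L̄ satisfies λ̄₁ ≤ d_max / ((N−1)·d_min). -/
/-!
The vector `s = (√d_i)_i` lies in the kernel of `L_sym`. Its restriction `w` to the nodes other
than `0` is a test vector for the grounded Laplacian: since `L_sym s = 0` and `L_sym` is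
symmetric, `wᵀ L̄ w = (L_sym)₀₀ s₀² = d₀`, while `wᵀ w = ∑_{i ≠ 0} d_i ≥ (N - 1) d_min`.
The smallest eigenvalue is at most the Rayleigh quotient
`d₀ / ∑_{i ≠ 0} d_i ≤ d_max / ((N - 1) d_min)`.
-/

open Matrix Finset

/-- Symmetric normalized Laplacian of a graph: `L_sym = I - D^{-1/2} A D^{-1/2}`. -/
noncomputable def Lsym {N : ℕ} (G : SimpleGraph (Fin N)) [DecidableRel G.Adj] :
    Matrix (Fin N) (Fin N) ℝ := fun i j =>
  (if i = j then (1 : ℝ) else 0) -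
    G.adjMatrix ℝ i j / Real.sqrt ((G.degree i : ℝ) * (G.degree j : ℝ))

/-- `μ` is a (real) eigenvalue of the real matrix `M`. -/
def IsEig {n : ℕ} (M : Matrix (Fin n) (Fin n) ℝ) (μ : ℝ) : Prop :=
  Module.End.HasEigenvalue (Matrix.toLin' M) μ

open Module.End

theorem LinearMap.IsSymmetric.exists_hasEigenvalue_le_rayleigh {𝕜 E : Type*} [RCLike 𝕜]
    [NormedAddCommGroup E] [InnerProductSpace 𝕜 E] [FiniteDimensional 𝕜 E]
    {T : E →ₗ[𝕜] E} (hT : T.IsSymmetric) {x : E} (hx : x ≠ 0) :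
    ∃ μ : ℝ, HasEigenvalue T μ ∧ μ ≤ RCLike.re (inner 𝕜 (T x) x) / ‖x‖ ^ 2 := by
  have : Nontrivial E := ⟨⟨x, 0, hx⟩⟩
  refine ⟨_, hT.hasEigenvalue_iInf_of_finiteDimensional,
    ciInf_le ?_ (⟨x, hx⟩ : {y : E // y ≠ 0})⟩
  refine ⟨-‖LinearMap.toContinuousLinearMap T‖, Set.forall_mem_range.2 fun y => ?_⟩
  exact neg_le_of_abs_le ((LinearMap.toContinuousLinearMap T).rayleighQuotient_le_norm y)

theorem Matrix.IsSymm.exists_hasEigenvalue_mul_dotProduct_le {ι : Type*} [Fintype ι]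
    [DecidableEq ι] {M : Matrix ι ι ℝ} (hM : M.IsSymm) {x : ι → ℝ} (hx : x ≠ 0) :
    ∃ μ : ℝ, HasEigenvalue (toLin' M) μ ∧ μ * (x ⬝ᵥ x) ≤ x ⬝ᵥ (M *ᵥ x) := by
  have hT : (toEuclideanLin M).IsSymmetric := isSymmetric_toEuclideanLin_iff.mpr hM
  have hx' : WithLp.toLp 2 x ≠ 0 := by simpa using hx
  obtain ⟨μ, hμ, hle⟩ := hT.exists_hasEigenvalue_le_rayleigh hx'
  refine ⟨μ, ?_, ?_⟩
  · rw [hasEigenvalue_iff_mem_spectrum, spectrum_toLin', ← spectrum_toLpLin 2]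
    exact hμ.mem_spectrum
  · rw [le_div_iff₀ (by positivity), ← real_inner_self_eq_norm_sq] at hle
    simp only [EuclideanSpace.inner_eq_star_dotProduct] at hle
    simpa [dotProduct_comm] using hle

theorem Matrix.submatrix_succ_mulVec_comp_succ_of_mulVec_eq_zero {R : Type*} [CommRing R] {n : ℕ}
    {L : Matrix (Fin (n + 1)) (Fin (n + 1)) R} {v : Fin (n + 1) → R} (hv : L *ᵥ v = 0)
    (i : Fin n) :
    (L.submatrix Fin.succ Fin.succ *ᵥ (v ∘ Fin.succ)) i = -(L i.succ 0 * v 0) := by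
  have h := congrFun hv i.succ
  rw [mulVec, dotProduct, Fin.sum_univ_succ] at h
  exact eq_neg_of_add_eq_zero_right h

theorem Matrix.IsSymm.dotProduct_submatrix_succ_mulVec_eq {R : Type*} [CommRing R] {n : ℕ}
    {L : Matrix (Fin (n + 1)) (Fin (n + 1)) R} (hL : L.IsSymm) {v : Fin (n + 1) → R}
    (hv : L *ᵥ v = 0) :
    (v ∘ Fin.succ) ⬝ᵥ (L.submatrix Fin.succ Fin.succ *ᵥ (v ∘ Fin.succ)) = v 0 * v 0 * L 0 0 := by
  have hrow0 : L 0 0 * v 0 + ∑ i : Fin n, L 0 i.succ * v i.succ = 0 := by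
    simpa [mulVec, dotProduct, Fin.sum_univ_succ] using congrFun hv 0
  calc (v ∘ Fin.succ) ⬝ᵥ (L.submatrix Fin.succ Fin.succ *ᵥ (v ∘ Fin.succ))
      = -(v 0 * ∑ i : Fin n, L 0 i.succ * v i.succ) := by
        simp only [dotProduct, submatrix_succ_mulVec_comp_succ_of_mulVec_eq_zero hv, hL.apply,
          Function.comp_apply, mul_sum, ← sum_neg_distrib]
        exact sum_congr rfl fun i _ => by ring
    _ = v 0 * v 0 * L 0 0 := by rw [eq_neg_of_add_eq_zero_right hrow0]; ring

section Lsym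

variable {N : ℕ} (G : SimpleGraph (Fin N)) [DecidableRel G.Adj]

theorem isSymm_Lsym : (Lsym G).IsSymm := by
  ext i j
  simp only [transpose_apply, Lsym, SimpleGraph.adjMatrix_apply, G.adj_comm j i,
    eq_comm (a := j), mul_comm (G.degree j : ℝ)]

theorem Lsym_self_apply (i : Fin N) : Lsym G i i = 1 := by
  simp [Lsym]

theorem Lsym_mulVec_sqrt_degree (hdeg : ∀ i, 0 < G.degree i) :
    Lsym G *ᵥ (fun i => √(G.degree i : ℝ)) = 0 := by
  ext i
  have hsqrt : ∀ j, √(G.degree j : ℝ) ≠ 0 := fun j =>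
    Real.sqrt_ne_zero'.mpr (by exact_mod_cast hdeg j)
  have hterm : ∀ j, G.adjMatrix ℝ i j / √((G.degree i : ℝ) * G.degree j) * √(G.degree j : ℝ)
      = G.adjMatrix ℝ i j * (√(G.degree i : ℝ))⁻¹ := fun j => by
    rw [Real.sqrt_mul (Nat.cast_nonneg _)]
    field_simp [hsqrt i, hsqrt j]
  have hrow : ∑ j, G.adjMatrix ℝ i j = G.degree i := by
    simpa [mulVec, dotProduct] using G.adjMatrix_mulVec_const_apply (α := ℝ) (a := 1) (v := i)
  simp only [mulVec, dotProduct, Lsym, sub_mul, sum_sub_distrib, ite_mul, one_mul, zero_mul,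
    sum_ite_eq, mem_univ, if_true, hterm, ← sum_mul, hrow, Pi.zero_apply]
  rw [sub_eq_zero, eq_mul_inv_iff_mul_eq₀ (hsqrt i), Real.mul_self_sqrt (Nat.cast_nonneg _)]

end Lsym

theorem dotProduct_Lsym_submatrix_succ_mulVec_sqrt_degree {n : ℕ} (G : SimpleGraph (Fin (n + 1)))
    [DecidableRel G.Adj] (hdeg : ∀ i, 0 < G.degree i) :
    ((fun i => √(G.degree i : ℝ)) ∘ Fin.succ) ⬝ᵥ
      ((Lsym G).submatrix Fin.succ Fin.succ *ᵥ ((fun i => √(G.degree i : ℝ)) ∘ Fin.succ))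
      = G.degree 0 := by
  rw [(isSymm_Lsym G).dotProduct_submatrix_succ_mulVec_eq (Lsym_mulVec_sqrt_degree G hdeg),
    Lsym_self_apply, mul_one, Real.mul_self_sqrt (Nat.cast_nonneg _)]

theorem grounded_lambda1_upper_bound_general {n : ℕ} (G : SimpleGraph (Fin (n + 2)))
    [DecidableRel G.Adj] (hconn : G.Connected)
    (dmax dmin : ℕ)
    (hdmax : dmax = univ.sup' univ_nonempty (fun i => G.degree i))
    (hdmin : dmin = univ.inf' univ_nonempty (fun i => G.degree i))
    (lam1 : ℝ)
    (hmin : ∀ μ : ℝ, IsEig ((Lsym G).submatrix Fin.succ Fin.succ) μ → lam1 ≤ μ) :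
    lam1 ≤ (dmax : ℝ) / (((n + 1 : ℕ) : ℝ) * (dmin : ℝ)) := by
  have hdeg : ∀ i, 0 < G.degree i := fun i => hconn.preconnected.degree_pos_of_nontrivial i
  set s : Fin (n + 2) → ℝ := fun i => √(G.degree i : ℝ)
  have hw : s ∘ Fin.succ ≠ 0 := fun h =>
    (Real.sqrt_pos.mpr (by exact_mod_cast hdeg (Fin.succ 0))).ne' (congrFun h 0)
  have hNdmin : (0 : ℝ) < ((n + 1 : ℕ) : ℝ) * dmin :=
    mul_pos (by positivity) (by exact_mod_cast hdmin ▸ (lt_inf'_iff _).mpr fun i _ => hdeg i)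
  have hww : ((n + 1 : ℕ) : ℝ) * dmin ≤ (s ∘ Fin.succ) ⬝ᵥ (s ∘ Fin.succ) := by
    have hle : ∀ i : Fin (n + 1), (dmin : ℝ) ≤ (s ∘ Fin.succ) i * (s ∘ Fin.succ) i := fun i => by
      rw [Function.comp_apply, Real.mul_self_sqrt (Nat.cast_nonneg _)]
      exact_mod_cast hdmin ▸ inf'_le _ (mem_univ _)
    simpa [dotProduct] using card_nsmul_le_sum univ _ _ fun i _ => hle i
  have hd0 : (G.degree 0 : ℝ) ≤ dmax := by exact_mod_cast hdmax ▸ le_sup' _ (mem_univ 0)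
  obtain ⟨μ, hμ, hμw⟩ :=
    ((isSymm_Lsym G).submatrix Fin.succ).exists_hasEigenvalue_mul_dotProduct_le hw
  calc lam1 ≤ μ := hmin μ hμ
    _ ≤ G.degree 0 / ((s ∘ Fin.succ) ⬝ᵥ (s ∘ Fin.succ)) := by
      rwa [le_div_iff₀ (hNdmin.trans_le hww),
        ← dotProduct_Lsym_submatrix_succ_mulVec_sqrt_degree G hdeg]
    _ ≤ dmax / (((n + 1 : ℕ) : ℝ) * dmin) := div_le_div₀ (by positivity) hd0 hNdmin hww

/-- For a simple connected undirected graph on `N = n + 2 ≥ 2` nodes, the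
smallest eigenvalue `λ̄₁` of the grounded (normalized) Laplacian, obtained by deleting the
row and column of node `0`, satisfies `λ̄₁ ≤ d_max / ((N - 1) * d_min)`. -/
theorem grounded_lambda1_upper_bound {n : ℕ} (G : SimpleGraph (Fin (n + 2)))
    [DecidableRel G.Adj] (hconn : G.Connected)
    (dmax dmin : ℕ)
    (hdmax : dmax = univ.sup' univ_nonempty (fun i => G.degree i))
    (hdmin : dmin = univ.inf' univ_nonempty (fun i => G.degree i))
    (lam1 : ℝ)
    (heig : IsEig ((Lsym G).submatrix Fin.succ Fin.succ) lam1)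
    (hmin : ∀ μ : ℝ, IsEig ((Lsym G).submatrix Fin.succ Fin.succ) μ → lam1 ≤ μ) :
    lam1 ≤ (dmax : ℝ) / (((n + 1 : ℕ) : ℝ) * (dmin : ℝ)) :=
  grounded_lambda1_upper_bound_general G hconn dmax dmin hdmax hdmin lam1 hmin
end

section
/- With the setup of the grounded Laplacian, a sharper bound holds: λ̄₁ ≤ d₁ / ((N−1)·d_min), where d₁ is the degree of the grounded node. -/
open Matrix Finset

/-!
The grounded matrix `L̄` is symmetric, so its smallest eigenvalue bounds its Rayleigh quotient
from below. Test it on `x = (√d_i)_{i ≠ 1}`: conjugating `L_sym` by `D^{1/2}` gives the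
combinatorial Laplacian `D - A`, whose rows and columns sum to zero, so `xᵀ L̄ x` is the sum of
the entries of `D - A` off the grounded row and column, which equals the corner entry `d₁`.
Since `xᵀ x = ∑_{i ≠ 1} d_i ≥ (N - 1) d_min`, this gives `λ̄₁ ≤ d₁ / ((N - 1) d_min)`.
-/

namespace Matrix

variable {ι : Type*} [Fintype ι] [DecidableEq ι]

theorem IsHermitian.posSemidef_sub_smul_one {M : Matrix ι ι ℝ} (hM : M.IsHermitian) {c : ℝ}
    (hc : ∀ μ, Module.End.HasEigenvalue (toLin' M) μ → c ≤ μ) : (M - c • 1).PosSemidef := by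
  refine posSemidef_iff_isHermitian_and_spectrum_nonneg.mpr ⟨hM.sub (by simp [IsHermitian]), ?_⟩
  rw [← Algebra.algebraMap_eq_smul_one, ← spectrum.sub_singleton_eq]
  rintro _ ⟨μ, hμ, _, rfl, rfl⟩
  exact sub_nonneg.mpr <|
    hc μ (Module.End.hasEigenvalue_iff_mem_spectrum.mpr (by rwa [spectrum_toLin']))

theorem IsHermitian.mul_dotProduct_self_le {M : Matrix ι ι ℝ} (hM : M.IsHermitian) {c : ℝ}
    (hc : ∀ μ, Module.End.HasEigenvalue (toLin' M) μ → c ≤ μ) (x : ι → ℝ) :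
    c * (x ⬝ᵥ x) ≤ x ⬝ᵥ (M *ᵥ x) := by
  have := (hM.posSemidef_sub_smul_one hc).dotProduct_mulVec_nonneg x
  rw [star_trivial, sub_mulVec, dotProduct_sub, smul_mulVec, one_mulVec, dotProduct_smul,
    smul_eq_mul] at this
  linarith

theorem sum_sum_succ_succ_eq_of_sums_eq_zero {R : Type*} [AddCommGroup R] {n : ℕ}
    (L : Matrix (Fin (n + 1)) (Fin (n + 1)) R) (hrow : ∀ i, ∑ j, L i j = 0)
    (hcol : ∀ j, ∑ i, L i j = 0) :
    ∑ i : Fin n, ∑ j : Fin n, L i.succ j.succ = L 0 0 := by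
  have htotal : ∑ i, ∑ j, L i j = 0 := Finset.sum_eq_zero fun i _ => hrow i
  have hrow0 := hrow 0
  have hcol0 := hcol 0
  simp only [Fin.sum_univ_succ] at htotal hrow0 hcol0
  rw [hrow0, zero_add, Finset.sum_add_distrib, eq_neg_of_add_eq_zero_right hcol0] at htotal
  rw [← neg_neg (L 0 0)]
  exact eq_neg_of_add_eq_zero_right htotal

end Matrix

namespace SimpleGraph

theorem sum_sum_lapMatrix_succ {R : Type*} [NonAssocRing R] {n : ℕ}
    (G : SimpleGraph (Fin (n + 1))) [DecidableRel G.Adj] :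
    ∑ i : Fin n, ∑ j : Fin n, G.lapMatrix R i.succ j.succ = G.degree 0 := by
  have hrow : ∀ i, ∑ j, G.lapMatrix R i j = 0 := fun i => by
    simpa [mulVec, dotProduct] using congrFun (G.lapMatrix_mulVec_const_eq_zero (R := R)) i
  rw [Matrix.sum_sum_succ_succ_eq_of_sums_eq_zero _ hrow
    fun j => by simpa only [(G.isSymm_lapMatrix R).apply] using hrow j]
  simp [lapMatrix, degMatrix]

section Lsym

variable {N : ℕ} (G : SimpleGraph (Fin N)) [DecidableRel G.Adj]

theorem isHermitian_Lsym : (Lsym G).IsHermitian := by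
  ext i j
  simp [Lsym, adjMatrix_apply, G.adj_comm, eq_comm, mul_comm]

theorem sqrt_degree_mul_Lsym_mul_sqrt_degree (u v : Fin N) :
    √(G.degree u : ℝ) * Lsym G u v * √(G.degree v : ℝ) = G.lapMatrix ℝ u v := by
  by_cases huv : u = v
  · subst huv
    simp [Lsym, lapMatrix, degMatrix, Real.mul_self_sqrt]
  by_cases hadj : G.Adj u v
  · have hu : (0 : ℝ) < G.degree u := by
      exact_mod_cast G.degree_pos_iff_exists_adj u |>.mpr ⟨v, hadj⟩
    have hv : (0 : ℝ) < G.degree v := by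
      exact_mod_cast G.degree_pos_iff_exists_adj v |>.mpr ⟨u, hadj.symm⟩
    simp [Lsym, lapMatrix, degMatrix, huv, hadj, Real.sqrt_mul hu.le]
    field_simp
  · simp [Lsym, lapMatrix, degMatrix, huv, hadj]

theorem sqrt_degree_dotProduct_self {ι : Type*} [Fintype ι] (f : ι → Fin N) :
    (fun i => √(G.degree (f i) : ℝ)) ⬝ᵥ (fun i => √(G.degree (f i) : ℝ)) =
      ∑ i, (G.degree (f i) : ℝ) := by
  simp [dotProduct, Real.mul_self_sqrt]

end Lsym

theorem sqrt_degree_dotProduct_grounded_Lsym_mulVec {n : ℕ} (G : SimpleGraph (Fin (n + 1)))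
    [DecidableRel G.Adj] :
    (fun i : Fin n => √(G.degree i.succ : ℝ)) ⬝ᵥ
      ((Lsym G).submatrix Fin.succ Fin.succ *ᵥ fun i => √(G.degree i.succ : ℝ)) =
        G.degree 0 := by
  simp only [dotProduct, mulVec, submatrix_apply, Finset.mul_sum, ← mul_assoc,
    sqrt_degree_mul_Lsym_mul_sqrt_degree]
  exact sum_sum_lapMatrix_succ G

end SimpleGraph

theorem grounded_lambda1_sharper_bound_general {n : ℕ} (G : SimpleGraph (Fin (n + 2)))
    [DecidableRel G.Adj] (hconn : G.Connected)
    (dmin : ℕ)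
    (hdmin : dmin = univ.inf' univ_nonempty (fun i => G.degree i))
    (lam1 : ℝ)
    (hmin : ∀ μ : ℝ, IsEig ((Lsym G).submatrix Fin.succ Fin.succ) μ → lam1 ≤ μ) :
    lam1 ≤ (G.degree 0 : ℝ) / (((n + 1 : ℕ) : ℝ) * (dmin : ℝ)) := by
  set x : Fin (n + 1) → ℝ := fun i => √(G.degree i.succ : ℝ)
  have hdmin_pos : (0 : ℝ) < dmin := by
    exact_mod_cast hdmin ▸ (lt_inf'_iff _).mpr fun v _ =>
      hconn.preconnected.degree_pos_of_nontrivial v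
  have hnorm : ((n + 1 : ℕ) : ℝ) * dmin ≤ x ⬝ᵥ x := by
    rw [G.sqrt_degree_dotProduct_self]
    calc ((n + 1 : ℕ) : ℝ) * dmin = ∑ _i : Fin (n + 1), (dmin : ℝ) := by simp
      _ ≤ ∑ i : Fin (n + 1), (G.degree i.succ : ℝ) := sum_le_sum fun i _ => by
          exact_mod_cast hdmin ▸ inf'_le _ (mem_univ i.succ)
  have hrayleigh : lam1 * (x ⬝ᵥ x) ≤ G.degree 0 :=
    G.sqrt_degree_dotProduct_grounded_Lsym_mulVec ▸
      (G.isHermitian_Lsym.submatrix Fin.succ).mul_dotProduct_self_le hmin x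
  have hpos : (0 : ℝ) < ((n + 1 : ℕ) : ℝ) * dmin := by positivity
  calc lam1 ≤ G.degree 0 / (x ⬝ᵥ x) := (le_div_iff₀ (hpos.trans_le hnorm)).mpr hrayleigh
    _ ≤ G.degree 0 / (((n + 1 : ℕ) : ℝ) * dmin) :=
      div_le_div_of_nonneg_left (by positivity) hpos hnorm

/-- the sharper bound `λ̄₁ ≤ d₁ / ((N - 1) * d_min)` where `d₁` is the degree
of the grounded node (node `0`). -/
theorem grounded_lambda1_sharper_bound {n : ℕ} (G : SimpleGraph (Fin (n + 2)))
    [DecidableRel G.Adj] (hconn : G.Connected)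
    (dmin : ℕ)
    (hdmin : dmin = univ.inf' univ_nonempty (fun i => G.degree i))
    (lam1 : ℝ)
    (heig : IsEig ((Lsym G).submatrix Fin.succ Fin.succ) lam1)
    (hmin : ∀ μ : ℝ, IsEig ((Lsym G).submatrix Fin.succ Fin.succ) μ → lam1 ≤ μ) :
    lam1 ≤ (G.degree 0 : ℝ) / (((n + 1 : ℕ) : ℝ) * (dmin : ℝ)) :=
  grounded_lambda1_sharper_bound_general G hconn dmin hdmin lam1 hmin
end

section
/- Let G be a simple undirected connected graph on N nodes with degrees bounded between d_min and d_max, and let L̄^(m) be the grounded symmetric normalized Laplacian obtained by removing m rows and the corresponding m columns (0 < m < N) from L_sym. Then the smallest eigenvalue satisfies λ̄₁^(m) ≤ m·d_max / ((N−m)·d_min). -/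
/-! The smallest eigenvalue of the symmetric matrix `L̄` is bounded by the Rayleigh quotient of
any vector. Test it on `s = D^{1/2} 1` restricted to the kept nodes. Conjugating `L_sym` by
`D^{1/2}` gives the combinatorial Laplacian `D - A`, whose rows sum to zero, so `sᵀ L̄ s` is the
number of edges between kept and grounded nodes: at most `m·d_max`. Meanwhile
`sᵀ s = Σ d_i ≥ (N - m)·d_min`. -/

open Matrix Finset

namespace Matrix.IsHermitian

variable {n : Type*} [Fintype n] [DecidableEq n] {M : Matrix n n ℝ}

theorem posSemidef_sub_algebraMap (hM : M.IsHermitian) {lam : ℝ}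
    (hlam : ∀ μ, Module.End.HasEigenvalue (toLin' M) μ → lam ≤ μ) :
    (M - algebraMap ℝ _ lam).PosSemidef := by
  have hshift : (M - algebraMap ℝ _ lam).IsHermitian :=
    hM.sub (by rw [algebraMap_eq_diagonal]; exact isHermitian_diagonal _)
  refine hshift.posSemidef_iff_eigenvalues_nonneg.2 fun i => ?_
  have hmem := hshift.eigenvalues_mem_spectrum_real i
  rw [← spectrum.sub_singleton_eq, Set.mem_sub] at hmem
  obtain ⟨μ, hμ, _, rfl, hi⟩ := hmem
  rw [← spectrum_toLin', ← Module.End.hasEigenvalue_iff_mem_spectrum] at hμ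
  simpa [← hi] using hlam μ hμ

theorem mul_dotProduct_self_le_s6 (hM : M.IsHermitian) {lam : ℝ}
    (hlam : ∀ μ, Module.End.HasEigenvalue (toLin' M) μ → lam ≤ μ) (x : n → ℝ) :
    lam * (x ⬝ᵥ x) ≤ x ⬝ᵥ (M *ᵥ x) := by
  have := (hM.posSemidef_sub_algebraMap hlam).re_dotProduct_nonneg x
  simpa [sub_mulVec, dotProduct_sub, Algebra.algebraMap_eq_smul_one, smul_mulVec, dotProduct_smul]
    using this

end Matrix.IsHermitian

namespace SimpleGraph

variable {V R : Type*} (G : SimpleGraph V) [DecidableRel G.Adj]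

theorem adjMatrix_nonneg [Zero R] [One R] [Preorder R] [ZeroLEOneClass R] (i j : V) :
    0 ≤ G.adjMatrix R i j := by
  rw [adjMatrix_apply]
  split_ifs
  exacts [zero_le_one, le_rfl]

noncomputable def sqrtDegree [Fintype V] (i : V) : ℝ :=
  Real.sqrt (G.degree i)

variable [Fintype V] [DecidableEq V]

theorem sum_lapMatrix_row [NonAssocRing R] (i : V) : ∑ j, G.lapMatrix R i j = 0 := by
  simpa [mulVec, dotProduct] using congrFun (G.lapMatrix_mulVec_const_eq_zero (R := R)) i

theorem sum_sum_lapMatrix_eq_sum_sum_adjMatrix_compl [NonAssocRing R] (S : Finset V) :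
    ∑ i ∈ S, ∑ j ∈ S, G.lapMatrix R i j = ∑ i ∈ S, ∑ j ∈ Sᶜ, G.adjMatrix R i j := by
  refine Finset.sum_congr rfl fun i hi => ?_
  have hrow := G.sum_lapMatrix_row (R := R) i
  rw [← Finset.sum_add_sum_compl S] at hrow
  rw [eq_neg_of_add_eq_zero_left hrow, ← Finset.sum_neg_distrib]
  refine Finset.sum_congr rfl fun j hj => ?_
  have hij : i ≠ j := by rintro rfl; exact Finset.mem_compl.1 hj hi
  simp [lapMatrix, degMatrix, hij]

variable [Ring R] [PartialOrder R] [IsOrderedRing R]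

theorem sum_sum_lapMatrix_nonneg (S : Finset V) :
    0 ≤ ∑ i ∈ S, ∑ j ∈ S, G.lapMatrix R i j := by
  rw [sum_sum_lapMatrix_eq_sum_sum_adjMatrix_compl]
  exact Finset.sum_nonneg fun i _ => Finset.sum_nonneg fun j _ => G.adjMatrix_nonneg i j

theorem sum_sum_lapMatrix_le_sum_degree_compl (S : Finset V) :
    ∑ i ∈ S, ∑ j ∈ S, G.lapMatrix R i j ≤ ∑ j ∈ Sᶜ, (G.degree j : R) := by
  rw [sum_sum_lapMatrix_eq_sum_sum_adjMatrix_compl]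
  refine Finset.sum_comm.trans_le (Finset.sum_le_sum fun j _ => ?_)
  calc ∑ i ∈ S, G.adjMatrix R i j
      ≤ ∑ i, G.adjMatrix R i j :=
        Finset.sum_le_sum_of_subset_of_nonneg S.subset_univ fun i _ _ => G.adjMatrix_nonneg i j
    _ = G.degree j := by
        simp_rw [G.isSymm_adjMatrix.apply j, degree_eq_sum_if_adj, adjMatrix_apply]

end SimpleGraph

section Lsym

variable {N : ℕ} (G : SimpleGraph (Fin N)) [DecidableRel G.Adj]

theorem isHermitian_Lsym : (Lsym G).IsHermitian := by
  ext i j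
  simp only [Lsym, conjTranspose_apply, star_trivial, SimpleGraph.adjMatrix_apply,
    eq_comm (a := j), G.adj_comm j, mul_comm (G.degree j : ℝ)]

theorem sqrtDegree_mul_Lsym_mul_sqrtDegree (i j : Fin N) :
    G.sqrtDegree i * Lsym G i j * G.sqrtDegree j = G.lapMatrix ℝ i j := by
  simp only [SimpleGraph.sqrtDegree, Lsym, SimpleGraph.lapMatrix, SimpleGraph.degMatrix,
    Matrix.sub_apply, diagonal_apply, SimpleGraph.adjMatrix_apply]
  by_cases hij : i = j
  · subst hij
    simp [Real.mul_self_sqrt]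
  by_cases hadj : G.Adj i j
  · have hi : (0 : ℝ) < G.degree i := mod_cast G.degree_pos_iff_exists_adj i |>.2 ⟨j, hadj⟩
    have hj : (0 : ℝ) < G.degree j := mod_cast G.degree_pos_iff_exists_adj j |>.2 ⟨i, hadj.symm⟩
    rw [Real.sqrt_mul hi.le]
    field_simp
    simp [hij, hadj]
  · simp [hij, hadj]

theorem dotProduct_submatrix_Lsym_mulVec_sqrtDegree {n : ℕ} (f : Fin n ↪ Fin N) :
    (G.sqrtDegree ∘ f) ⬝ᵥ ((Lsym G).submatrix f f *ᵥ (G.sqrtDegree ∘ f)) =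
      ∑ i ∈ univ.map f, ∑ j ∈ univ.map f, G.lapMatrix ℝ i j := by
  simp only [Finset.sum_map, ← sqrtDegree_mul_Lsym_mul_sqrtDegree, dotProduct, mulVec,
    Finset.mul_sum, Function.comp_apply, submatrix_apply]
  exact Finset.sum_congr rfl fun _ _ => Finset.sum_congr rfl fun _ _ => by ring

end Lsym

theorem grounded_m_nodes_lambda1_bound_general {N : ℕ} (G : SimpleGraph (Fin N))
    [DecidableRel G.Adj]
    (dmin dmax : ℝ)
    (hdmin : ∀ i, dmin ≤ (G.degree i : ℝ)) (hdmax : ∀ i, (G.degree i : ℝ) ≤ dmax)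
    (hdminpos : 0 < dmin)
    (m : ℕ) (hmN : m < N)
    (f : Fin (N - m) ↪ Fin N)
    (lam1 : ℝ)
    (hmin : ∀ μ : ℝ, IsEig ((Lsym G).submatrix f f) μ → lam1 ≤ μ) :
    lam1 ≤ (m : ℝ) * dmax / (((N - m : ℕ) : ℝ) * dmin) := by
  set s := G.sqrtDegree ∘ f
  set S := univ.map f
  have hrayleigh : lam1 * (s ⬝ᵥ s) ≤ s ⬝ᵥ ((Lsym G).submatrix f f *ᵥ s) :=
    ((isHermitian_Lsym G).submatrix f).mul_dotProduct_self_le_s6 hmin s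
  have hcard : Sᶜ.card = m := by
    rw [card_compl, card_map, card_univ, Fintype.card_fin, Fintype.card_fin]
    omega
  have hnum_le : s ⬝ᵥ ((Lsym G).submatrix f f *ᵥ s) ≤ m * dmax := by
    rw [dotProduct_submatrix_Lsym_mulVec_sqrtDegree]
    calc _ ≤ ∑ j ∈ Sᶜ, (G.degree j : ℝ) := G.sum_sum_lapMatrix_le_sum_degree_compl S
      _ ≤ Sᶜ.card • dmax := sum_le_card_nsmul _ _ _ fun j _ => hdmax j
      _ = m * dmax := by rw [hcard, nsmul_eq_mul]
  have hnum_nonneg : 0 ≤ s ⬝ᵥ ((Lsym G).submatrix f f *ᵥ s) := by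
    rw [dotProduct_submatrix_Lsym_mulVec_sqrtDegree]
    exact G.sum_sum_lapMatrix_nonneg S
  have hden : ((N - m : ℕ) : ℝ) * dmin ≤ s ⬝ᵥ s := by
    calc ((N - m : ℕ) : ℝ) * dmin = ∑ _j : Fin (N - m), dmin := by simp
      _ ≤ ∑ j, (G.degree (f j) : ℝ) := sum_le_sum fun j _ => hdmin (f j)
      _ = s ⬝ᵥ s := by
        simp [s, dotProduct, SimpleGraph.sqrtDegree, Real.mul_self_sqrt]
  have hden_pos : 0 < ((N - m : ℕ) : ℝ) * dmin := by
    have : 0 < N - m := by omega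
    positivity
  rw [le_div_iff₀ hden_pos]
  rcases le_or_gt lam1 0 with hlam | hlam
  · linarith [mul_nonpos_of_nonpos_of_nonneg hlam hden_pos.le]
  · linarith [mul_le_mul_of_nonneg_left hden hlam.le]

/-- grounding `m` nodes (removing the `m` rows and columns outside the range
of the injection `f : Fin (N - m) ↪ Fin N` of kept nodes, `0 < m < N`), the smallest
eigenvalue of the resulting grounded symmetric normalized Laplacian satisfies
`λ̄₁^{(m)} ≤ m·d_max / ((N - m)·d_min)`. -/
theorem grounded_m_nodes_lambda1_bound {N : ℕ} (G : SimpleGraph (Fin N))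
    [DecidableRel G.Adj] (hconn : G.Connected)
    (dmin dmax : ℝ)
    (hdmin : ∀ i, dmin ≤ (G.degree i : ℝ)) (hdmax : ∀ i, (G.degree i : ℝ) ≤ dmax)
    (hdminpos : 0 < dmin)
    (m : ℕ) (hm : 0 < m) (hmN : m < N)
    (f : Fin (N - m) ↪ Fin N)
    (lam1 : ℝ)
    (heig : IsEig ((Lsym G).submatrix f f) lam1)
    (hmin : ∀ μ : ℝ, IsEig ((Lsym G).submatrix f f) μ → lam1 ≤ μ) :
    lam1 ≤ (m : ℝ) * dmax / (((N - m : ℕ) : ℝ) * dmin) :=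
  grounded_m_nodes_lambda1_bound_general G dmin dmax hdmin hdmax hdminpos m hmN f lam1 hmin
end

section
/- Let A, B be matrices with (A,B) controllable and suppose there exists a symmetric positive definite P and a gain K such that A − λ BK is Schur stable for all λ in a set containing the nonzero eigenvalues λ₂,…,λ_N of the normalized Laplacian L of a connected undirected graph. Then the multi-agent system x(k+1) = (I_N ⊗ A − L ⊗ BK)x(k) achieves consensus, i.e., x_i(k) − x_j(k) → 0 for all i,j; equivalently, the spectrum of I_N ⊗ A − L ⊗ BK equals the union of the spectra of A − λ_i BK for i = 1,…,N, where λ₁ = 0. -/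
/-!
Write `M = I_N ⊗ A − L ⊗ BK`. The random-walk Laplacian `L = D⁻¹(D − Adj)` is similar, through
`D^{1/2}`, to the symmetric matrix `D^{-1/2}(D − Adj)D^{-1/2}`, hence `L = V diag(λ) V⁻¹` with real
`λ`. Conjugating `M` by `V ⊗ I` turns it into the block diagonal matrix with blocks `A − λ_m BK`,
which gives the spectrum. In these modal coordinates `x(k) = Σ_m v_m ⊗ (A − λ_m BK)^k y_m`:
the modes with `λ_m ≠ 0` decay by Schur stability, and the columns `v_m` with `λ_m = 0` lie in
`ker L`, which on a connected graph consists of constant vectors, so they contribute equally to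
every agent.
-/

open Matrix Finset Kronecker Polynomial Filter

/-- Random-walk normalized Laplacian: `L = I - D⁻¹ A`. -/
noncomputable def Lrw {N : ℕ} (G : SimpleGraph (Fin N)) [DecidableRel G.Adj] :
    Matrix (Fin N) (Fin N) ℝ := fun i j =>
  (if i = j then (1 : ℝ) else 0) - G.adjMatrix ℝ i j / (G.degree i : ℝ)

/-- Kalman rank condition: the pair `(A, B)` (single input) is controllable. -/
def Controllable {nn : ℕ} (A : Matrix (Fin nn) (Fin nn) ℝ)
    (B : Matrix (Fin nn) (Fin 1) ℝ) : Prop :=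
  (Matrix.of fun (i : Fin nn) (p : Fin nn × Fin 1) => (A ^ (p.1 : ℕ) * B) i p.2).rank = nn

/-- A real matrix is Schur stable: all its (complex) eigenvalues have modulus `< 1`. -/
def SchurStable {nn : ℕ} (M : Matrix (Fin nn) (Fin nn) ℝ) : Prop :=
  ∀ μ ∈ spectrum ℂ (M.map Complex.ofReal), ‖μ‖ < 1

open scoped Topology

theorem tendsto_pow_nhds_zero_of_spectralRadius_lt_one {A : Type*} [NormedRing A]
    [NormedAlgebra ℂ A] [CompleteSpace A] {a : A} (ha : spectralRadius ℂ a < 1) :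
    Tendsto (a ^ ·) atTop (𝓝 0) := by
  obtain ⟨r, hρr, hr1⟩ := ENNReal.lt_iff_exists_nnreal_btwn.mp ha
  have hbound : ∀ᶠ n : ℕ in atTop, ‖a ^ n‖₊ ≤ r ^ n := by
    have hgelfand := spectrum.pow_nnnorm_pow_one_div_tendsto_nhds_spectralRadius a
    filter_upwards [hgelfand.eventually_lt_const hρr, eventually_ge_atTop 1] with n hn hn1
    rw [one_div, ENNReal.rpow_inv_lt_iff (by positivity), ENNReal.rpow_natCast] at hn
    exact_mod_cast hn.le
  exact squeeze_zero_norm' (hbound.mono fun n hn => by exact_mod_cast hn)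
    (tendsto_pow_atTop_nhds_zero_of_lt_one r.2 (by exact_mod_cast hr1))

section
attribute [local instance] Matrix.linftyOpNormedRing Matrix.linftyOpNormedAlgebra

theorem SchurStable.tendsto_pow_apply {n : ℕ} {M : Matrix (Fin n) (Fin n) ℝ} (hM : SchurStable M)
    (i j : Fin n) : Tendsto (fun k => (M ^ k) i j) atTop (𝓝 0) := by
  have : Nonempty (Fin n) := ⟨i⟩
  have hρ : spectralRadius ℂ (M.map Complex.ofReal) < 1 := by
    simpa using spectrum.spectralRadius_lt_of_forall_lt (r := 1) _ fun μ hμ => by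
      exact_mod_cast hM μ hμ
  have hentry : Continuous fun X : Matrix (Fin n) (Fin n) ℂ => (X i j).re :=
    Complex.continuous_re.comp
      (LinearMap.continuous_of_finiteDimensional (entryLinearMap ℂ ℂ i j))
  have hpow (k : ℕ) : M.map Complex.ofReal ^ k = (M ^ k).map Complex.ofReal :=
    (map_pow Complex.ofRealHom.mapMatrix M k).symm
  simpa [hpow, Function.comp_def] using
    (hentry.tendsto 0).comp (tendsto_pow_nhds_zero_of_spectralRadius_lt_one hρ)

end

theorem Polynomial.map_univ_eq_of_prod_X_sub_C_eq {R : Type*} [CommRing R] [IsDomain R]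
    {ι ι' : Type*} [Fintype ι] [Fintype ι'] {e : ι → R} {l : ι' → R}
    (h : ∏ i, (X - C (e i)) = ∏ i, (X - C (l i))) : univ.val.map e = univ.val.map l := by
  simpa [roots_prod, prod_ne_zero_iff, X_sub_C_ne_zero] using congrArg roots h

theorem Finset.prod_comp_eq_of_map_univ_eq {α M ι ι' : Type*} [CommMonoid M] [Fintype ι]
    [Fintype ι'] {e : ι → α} {l : ι' → α} (h : univ.val.map e = univ.val.map l) (f : α → M) :
    ∏ i, f (e i) = ∏ i, f (l i) := by
  simpa [← prod_map_val, Multiset.map_map] using congrArg (fun s => (s.map f).prod) h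

namespace Matrix

theorem spectrum_map_eq_iUnion_of_charpoly_eq_prod {K L : Type*} [Field K] [Field L]
    (φ : K →+* L) {n ι κ : Type*} [Fintype n] [DecidableEq n] [Fintype ι] [Fintype κ]
    [DecidableEq κ] {M : Matrix n n K} {f : ι → Matrix κ κ K}
    (h : M.charpoly = ∏ i, (f i).charpoly) :
    spectrum L (M.map φ) = ⋃ i, spectrum L ((f i).map φ) := by
  ext μ
  simp [mem_spectrum_iff_isRoot_charpoly, charpoly_map, h, Polynomial.map_prod, eval_prod,
    prod_eq_zero_iff]

theorem exists_diagonal_inv_mul_eq_mul_diagonal_mul {ι : Type*} [Fintype ι] [DecidableEq ι]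
    {d : ι → ℝ} (hd : ∀ i, 0 < d i) {Q : Matrix ι ι ℝ} (hQ : Q.IsHermitian) :
    ∃ (V W : Matrix ι ι ℝ) (e : ι → ℝ), V * W = 1 ∧ diagonal d⁻¹ * Q = V * diagonal e * W := by
  set s : ι → ℝ := fun i => √(d i)
  have hsS : diagonal s⁻¹ * diagonal s = 1 := by
    simp [diagonal_mul_diagonal, inv_mul_cancel₀ (Real.sqrt_pos.mpr (hd _)).ne', s]
  have hss : diagonal s⁻¹ * diagonal s⁻¹ = diagonal d⁻¹ := by
    simp [diagonal_mul_diagonal, s, ← mul_inv, Real.mul_self_sqrt (hd _).le]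
  have hH : (diagonal s⁻¹ * Q * diagonal s⁻¹).IsHermitian := by
    simpa using isHermitian_mul_mul_conjTranspose (diagonal s⁻¹) hQ
  generalize hHdef : diagonal s⁻¹ * Q * diagonal s⁻¹ = H at hH
  set U : Matrix ι ι ℝ := (hH.eigenvectorUnitary : Matrix ι ι ℝ)
  refine ⟨diagonal s⁻¹ * U, star U * diagonal s, hH.eigenvalues, ?_, ?_⟩
  · rw [mul_assoc, ← mul_assoc U, Unitary.mul_star_self_of_mem hH.eigenvectorUnitary.2, one_mul,
      hsS]
  · calc diagonal d⁻¹ * Q = diagonal s⁻¹ * H * diagonal s := by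
          rw [← hHdef, ← hss]; simp only [mul_assoc, hsS, mul_one]
      _ = _ := by
          conv_lhs => rw [hH.spectral_theorem]
          simp only [Unitary.conjStarAlgAut_apply, mul_assoc]
          rfl

variable {R : Type*} [CommRing R] {ι κ : Type*}

theorem one_kronecker_sub_diagonal_kronecker [DecidableEq ι] (A C : Matrix κ κ R) (e : ι → R) :
    (1 : Matrix ι ι R) ⊗ₖ A - diagonal e ⊗ₖ C =
      reindex (Equiv.prodComm κ ι) (Equiv.prodComm κ ι) (blockDiagonal fun i => A - e i • C) := by
  rw [one_kronecker, diagonal_kronecker]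
  exact congrArg (reindex _ _) (blockDiagonal_sub (fun _ => A) fun i => e i • C).symm

variable [Fintype ι] [Fintype κ]

theorem kronecker_one_mulVec_apply [DecidableEq κ] (V : Matrix ι ι R) (x : ι × κ → R) (i : ι)
    (a : κ) : (V ⊗ₖ (1 : Matrix κ κ R) *ᵥ x) (i, a) = ∑ m, V i m * x (m, a) := by
  simp [mulVec, dotProduct, Fintype.sum_prod_type, one_apply]

theorem reindex_blockDiagonal_mulVec_apply [DecidableEq ι] (f : ι → Matrix κ κ R)
    (x : ι × κ → R) (i : ι) (a : κ) :
    (reindex (Equiv.prodComm κ ι) (Equiv.prodComm κ ι) (blockDiagonal f) *ᵥ x) (i, a) =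
      (f i *ᵥ fun b => x (i, b)) a := by
  simp [mulVec, dotProduct, Fintype.sum_prod_type, blockDiagonal_apply]

variable [DecidableEq ι] [DecidableEq κ]

theorem charpoly_blockDiagonal (f : ι → Matrix κ κ R) :
    (blockDiagonal f).charpoly = ∏ i, (f i).charpoly := by
  have hchar : charmatrix (blockDiagonal f) = blockDiagonal fun i => charmatrix (f i) := by
    ext ⟨a, i⟩ ⟨b, j⟩
    by_cases hij : i = j
    · subst hij
      by_cases hab : a = b <;> simp [blockDiagonal_apply, hab]
    · simp [blockDiagonal_apply, hij]
  rw [charpoly, hchar, det_blockDiagonal]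
  rfl

variable (A C : Matrix κ κ R) {L V W : Matrix ι ι R} {e : ι → R}

theorem one_kronecker_sub_kronecker_eq_conj (hVW : V * W = 1) (hL : L = V * diagonal e * W) :
    1 ⊗ₖ A - L ⊗ₖ C = (V ⊗ₖ 1) * (1 ⊗ₖ A - diagonal e ⊗ₖ C) * (W ⊗ₖ (1 : Matrix κ κ R)) := by
  simp only [hL, mul_sub, sub_mul, ← mul_kronecker_mul, one_mul, mul_one, hVW]

theorem charpoly_one_kronecker_sub_kronecker (hVW : V * W = 1) (hL : L = V * diagonal e * W) :
    (1 ⊗ₖ A - L ⊗ₖ C).charpoly = ∏ i, (A - e i • C).charpoly := by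
  rw [one_kronecker_sub_kronecker_eq_conj A C hVW hL, charpoly_mul_comm, ← mul_assoc,
    ← mul_kronecker_mul, mul_eq_one_comm.mp hVW, mul_one, one_kronecker_one, one_mul,
    one_kronecker_sub_diagonal_kronecker, charpoly_reindex, charpoly_blockDiagonal]

theorem one_kronecker_sub_kronecker_pow_mulVec_apply (hVW : V * W = 1)
    (hL : L = V * diagonal e * W) (x : ι × κ → R) (k : ℕ) (i : ι) (a : κ) :
    ((1 ⊗ₖ A - L ⊗ₖ C) ^ k *ᵥ x) (i, a) =
      ∑ m, V i m * ((A - e m • C) ^ k *ᵥ fun b => ((W ⊗ₖ 1) *ᵥ x) (m, b)) a := by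
  let u : (Matrix (ι × κ) (ι × κ) R)ˣ :=
    ⟨V ⊗ₖ 1, W ⊗ₖ 1, by rw [← mul_kronecker_mul, hVW, mul_one, one_kronecker_one],
      by rw [← mul_kronecker_mul, mul_eq_one_comm.mp hVW, mul_one, one_kronecker_one]⟩
  rw [one_kronecker_sub_kronecker_eq_conj A C hVW hL,
    show (V ⊗ₖ 1) * _ * (W ⊗ₖ 1) = ↑u * (1 ⊗ₖ A - diagonal e ⊗ₖ C) * ↑u⁻¹ from rfl,
    Units.conj_pow, one_kronecker_sub_diagonal_kronecker, ← coe_reindexAlgEquiv R R, ← map_pow,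
    ← blockDiagonal_pow, coe_reindexAlgEquiv, ← mulVec_mulVec, ← mulVec_mulVec,
    show ((u⁻¹ : (Matrix (ι × κ) (ι × κ) R)ˣ) : Matrix (ι × κ) (ι × κ) R) = W ⊗ₖ 1 from rfl]
  simp only [u, kronecker_one_mulVec_apply, reindex_blockDiagonal_mulVec_apply, Pi.pow_apply]

end Matrix

theorem tendsto_one_kronecker_sub_kronecker_pow_mulVec_sub {N n : ℕ}
    {L V W : Matrix (Fin N) (Fin N) ℝ} {e : Fin N → ℝ} (A C : Matrix (Fin n) (Fin n) ℝ)
    (hVW : V * W = 1) (hL : L = V * diagonal e * W)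
    (hker : ∀ x, L *ᵥ x = 0 → ∀ i j, x i = x j)
    (hstable : ∀ m, e m ≠ 0 → SchurStable (A - e m • C))
    (x : Fin N × Fin n → ℝ) (i j : Fin N) (a : Fin n) :
    Tendsto (fun k => ((1 ⊗ₖ A - L ⊗ₖ C) ^ k *ᵥ x) (i, a) - ((1 ⊗ₖ A - L ⊗ₖ C) ^ k *ᵥ x) (j, a))
      atTop (𝓝 0) := by
  simp_rw [one_kronecker_sub_kronecker_pow_mulVec_apply A C hVW hL, ← sum_sub_distrib, ← sub_mul]
  rw [show (0 : ℝ) = ∑ _m : Fin N, 0 by simp]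
  refine tendsto_finsetSum _ fun m _ => ?_
  by_cases hm : e m = 0
  · have hLV : L * V = V * diagonal e := by rw [hL, mul_assoc, mul_eq_one_comm.mp hVW, mul_one]
    have hcol : L *ᵥ col V m = 0 := by
      rw [← mulVec_single_one, mulVec_mulVec, hLV, ← mulVec_mulVec, diagonal_mulVec_single, hm,
        zero_mul, Pi.single_zero, mulVec_zero]
    simp [show V i m = V j m from hker _ hcol i j]
  · set y : Fin n → ℝ := fun b => ((W ⊗ₖ 1) *ᵥ x) (m, b)
    have hdecay : Tendsto (fun k => ((A - e m • C) ^ k *ᵥ y) a) atTop (𝓝 0) := by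
      simpa [mulVec, dotProduct] using tendsto_finsetSum univ fun b _ =>
        ((hstable m hm).tendsto_pow_apply a b).mul_const (y b)
    simpa using hdecay.const_mul (V i m - V j m)

namespace SimpleGraph

variable {N : ℕ} (G : SimpleGraph (Fin N)) [DecidableRel G.Adj]

theorem degMatrix_mul_Lrw : G.degMatrix ℝ * Lrw G = G.lapMatrix ℝ := by
  ext i j
  by_cases hij : G.Adj i j
  · have hdeg : (G.degree i : ℝ) ≠ 0 := by
      exact_mod_cast ((G.degree_pos_iff_exists_adj i).mpr ⟨j, hij⟩).ne'
    simp [degMatrix, lapMatrix, Lrw, hij, hij.ne, hdeg]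
  · by_cases h : i = j <;> simp [degMatrix, lapMatrix, Lrw, hij, h]

theorem Connected.eq_of_Lrw_mulVec_eq_zero {G : SimpleGraph (Fin N)} [DecidableRel G.Adj]
    (hG : G.Connected) {x : Fin N → ℝ} (hx : Lrw G *ᵥ x = 0) (i j : Fin N) : x i = x j := by
  have hlap : G.lapMatrix ℝ *ᵥ x = 0 := by
    rw [← degMatrix_mul_Lrw, ← mulVec_mulVec, hx, mulVec_zero]
  exact (lapMatrix_mulVec_eq_zero_iff_forall_reachable G).mp hlap i j (hG.preconnected i j)

-- At an isolated vertex `Lrw G` has the unit row (its division by the degree is `x / 0 = 0`),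
-- which `max · 1` reproduces.
theorem Lrw_eq_diagonal_inv_mul :
    Lrw G = diagonal (fun v => max (G.degree v : ℝ) 1)⁻¹ *
      (diagonal (fun v => max (G.degree v : ℝ) 1) - G.adjMatrix ℝ) := by
  ext i j
  by_cases hij : G.Adj i j
  · have hdeg : (1 : ℝ) ≤ G.degree i := by
      exact_mod_cast (G.degree_pos_iff_exists_adj i).mpr ⟨j, hij⟩
    simp [Lrw, hij, hij.ne, max_eq_left hdeg]
  · by_cases h : i = j
    · subst h
      simp [Lrw, inv_mul_cancel₀ (lt_max_of_lt_right one_pos).ne']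
    · simp [Lrw, hij, h]

theorem exists_Lrw_eq_mul_diagonal_mul :
    ∃ (V W : Matrix (Fin N) (Fin N) ℝ) (e : Fin N → ℝ), V * W = 1 ∧
      Lrw G = V * diagonal e * W := by
  rw [Lrw_eq_diagonal_inv_mul]
  exact exists_diagonal_inv_mul_eq_mul_diagonal_mul (fun _ => lt_max_of_lt_right one_pos)
    ((isHermitian_diagonal _).sub (G.isHermitian_adjMatrix ℝ))

end SimpleGraph

theorem consensus_and_kronecker_spectrum_general {N nn : ℕ} (G : SimpleGraph (Fin N))
    [DecidableRel G.Adj] (hconn : G.Connected)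
    (A : Matrix (Fin nn) (Fin nn) ℝ) (B : Matrix (Fin nn) (Fin 1) ℝ)
    (K : Matrix (Fin 1) (Fin nn) ℝ)
    (lam : Fin N → ℝ)
    (hchar : (Lrw G).charpoly = ∏ i, (X - C (lam i)))
    (hschur : ∀ i : Fin N, lam i ≠ 0 → SchurStable (A - lam i • (B * K))) :
    (∀ x0 : Fin N × Fin nn → ℝ, ∀ i j : Fin N, ∀ a : Fin nn,
        Tendsto
          (fun k : ℕ =>
            ((((1 : Matrix (Fin N) (Fin N) ℝ) ⊗ₖ A - (Lrw G) ⊗ₖ (B * K)) ^ k) *ᵥ x0) (i, a)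
              - ((((1 : Matrix (Fin N) (Fin N) ℝ) ⊗ₖ A - (Lrw G) ⊗ₖ (B * K)) ^ k) *ᵥ x0) (j, a))
          atTop (nhds 0)) ∧
    spectrum ℂ
        (((1 : Matrix (Fin N) (Fin N) ℝ) ⊗ₖ A - (Lrw G) ⊗ₖ (B * K)).map Complex.ofReal)
      = ⋃ i : Fin N, spectrum ℂ ((A - lam i • (B * K)).map Complex.ofReal) := by
  obtain ⟨V, W, e, hVW, hL⟩ := G.exists_Lrw_eq_mul_diagonal_mul
  have heig : univ.val.map e = univ.val.map lam := by
    refine map_univ_eq_of_prod_X_sub_C_eq ?_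
    rw [← charpoly_diagonal, ← hchar, hL, charpoly_mul_comm, ← mul_assoc,
      mul_eq_one_comm.mp hVW, one_mul]
  refine ⟨fun x0 i j a => tendsto_one_kronecker_sub_kronecker_pow_mulVec_sub A (B * K) hVW hL
    (fun _ hx => hconn.eq_of_Lrw_mulVec_eq_zero hx) (fun m hm => ?_) x0 i j a, ?_⟩
  · obtain ⟨i, -, hi⟩ := Multiset.mem_map.mp (heig ▸ Multiset.mem_map_of_mem e (mem_univ m))
    exact hi ▸ hschur i (hi ▸ hm)
  · refine spectrum_map_eq_iUnion_of_charpoly_eq_prod Complex.ofRealHom ?_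
    rw [charpoly_one_kronecker_sub_kronecker A (B * K) hVW hL]
    exact prod_comp_eq_of_map_univ_eq heig fun l => (A - l • (B * K)).charpoly

/-- if `(A,B)` is controllable and there are a symmetric positive definite
`P` and a gain `K` such that `A − λᵢ B K` is Schur stable for all nonzero eigenvalues
`λ₂, …, λ_N` of the normalized Laplacian `L` of a connected undirected graph
(eigenvalues enumerated by `lam`, with `lam 0 = λ₁ = 0`), then the multi-agent system
`x(k+1) = (I_N ⊗ A − L ⊗ BK) x(k)` achieves consensus (`xᵢ(k) − xⱼ(k) → 0`);
equivalently, the spectrum of `I_N ⊗ A − L ⊗ BK` is the union of the spectra of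
`A − λᵢ B K`, `i = 1, …, N`. -/
theorem consensus_and_kronecker_spectrum {N nn : ℕ} (G : SimpleGraph (Fin N))
    [DecidableRel G.Adj] (hconn : G.Connected)
    (A : Matrix (Fin nn) (Fin nn) ℝ) (B : Matrix (Fin nn) (Fin 1) ℝ)
    (K : Matrix (Fin 1) (Fin nn) ℝ)
    (hctrb : Controllable A B)
    (P : Matrix (Fin nn) (Fin nn) ℝ) (hP : P.PosDef)
    (lam : Fin N → ℝ) (hlam_mono : Monotone lam)
    (hchar : (Lrw G).charpoly = ∏ i, (X - C (lam i)))
    (hlam0 : ∀ h0 : 0 < N, lam ⟨0, h0⟩ = 0)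
    (hschur : ∀ i : Fin N, lam i ≠ 0 → SchurStable (A - lam i • (B * K))) :
    (∀ x0 : Fin N × Fin nn → ℝ, ∀ i j : Fin N, ∀ a : Fin nn,
        Tendsto
          (fun k : ℕ =>
            ((((1 : Matrix (Fin N) (Fin N) ℝ) ⊗ₖ A - (Lrw G) ⊗ₖ (B * K)) ^ k) *ᵥ x0) (i, a)
              - ((((1 : Matrix (Fin N) (Fin N) ℝ) ⊗ₖ A - (Lrw G) ⊗ₖ (B * K)) ^ k) *ᵥ x0) (j, a))
          atTop (nhds 0)) ∧
    spectrum ℂ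
        (((1 : Matrix (Fin N) (Fin N) ℝ) ⊗ₖ A - (Lrw G) ⊗ₖ (B * K)).map Complex.ofReal)
      = ⋃ i : Fin N, spectrum ℂ ((A - lam i • (B * K)).map Complex.ofReal) :=
  consensus_and_kronecker_spectrum_general G hconn A B K lam hchar hschur
end
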